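/- For every odd integer n ≥ 3 and every integer m ≥ 2, μ_s(C_n + K̄_m) ≤ mn − (n+m) + 1, i.e., C_n + K̄_m ∪ (mn − n − m + 1)K_1 is super edge-magic. -/

import Mathlib

/-! With `n = 2a + 1`, every edge sum `f x + f y` of the labeling below can be written uniquely as
`a + 3 + (k n + r)` with `r < n` and `k ≤ m`: the edges at the `v` labeled `1` give the block
`k = 0`, the cycle edges the block `k = 1`, and the edges at the `v` labeled `k n + 1`
(`2 ≤ k ≤ m`) the block `k`. So the edge sums are distinct and fill an interval. By the criterion
of Figueroa-Centeno et al., a vertex labeling onto `{1, …, p}` with this property extends to a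
super edge-magic labeling; the added isolated vertices take the labels the join leaves unused. -/

open SimpleGraph

/-- A super edge-magic labeling of `G` with magic constant `k`: a bijection from
vertices and edges onto `{1, …, p+q}` sending vertices onto `{1, …, p}`, with
`f x + f (xy) + f y = k` for every edge `xy`. -/
def IsSEMWith {V : Type*} [Fintype V] (G : SimpleGraph V) (k : ℕ) : Prop :=
  ∃ (f : V → ℕ) (g : G.edgeSet → ℕ),
    Function.Injective (Sum.elim f g) ∧
    Set.range (Sum.elim f g) = Set.Icc 1 (Fintype.card V + G.edgeSet.ncard) ∧
    Set.range f = Set.Icc 1 (Fintype.card V) ∧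
    ∀ (x y : V) (h : G.Adj x y), f x + g ⟨s(x, y), G.mem_edgeSet.mpr h⟩ + f y = k

/-- `G` is super edge-magic. -/
def IsSEM {V : Type*} [Fintype V] (G : SimpleGraph V) : Prop :=
  ∃ k : ℕ, IsSEMWith G k

/-- The graph `G ∪ t K₁`: `G` together with `t` added isolated vertices. -/
def unionIsolated {V : Type*} (G : SimpleGraph V) (t : ℕ) : SimpleGraph (V ⊕ Fin t) :=
  G.map Function.Embedding.inl

/-- The super edge-magic deficiency `μₛ(G)`: the least `t` such that `G ∪ t K₁`
is super edge-magic, or `⊤` if there is no such `t`. -/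
noncomputable def semDeficiency {V : Type*} [Fintype V] (G : SimpleGraph V) : ℕ∞ :=
  sInf ((fun t : ℕ => (t : ℕ∞)) '' {t : ℕ | IsSEM (unionIsolated G t)})

/-- `H n`: the wheel `W_n` (hub `0`, rim `1, …, n`) minus the spoke `{0, 1}`. -/
def wheelMinusSpoke (n : ℕ) : SimpleGraph (Fin (n + 1)) :=
  SimpleGraph.fromRel (fun i j =>
    ((i : ℕ) = 0 ∧ 2 ≤ (j : ℕ)) ∨
    ((j : ℕ) = (i : ℕ) + 1 ∧ 1 ≤ (i : ℕ)) ∨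
    ((i : ℕ) = n ∧ (j : ℕ) = 1))

/-- The join `P_n + K̄_m`: a path `u_1 … u_n` plus `m` vertices joined to every `u_i`. -/
def pathJoin (n m : ℕ) : SimpleGraph (Fin n ⊕ Fin m) :=
  SimpleGraph.fromRel (fun a b =>
    (∃ i j : Fin n, a = Sum.inl i ∧ b = Sum.inl j ∧ (j : ℕ) = (i : ℕ) + 1) ∨
    (∃ (i : Fin n) (j : Fin m), a = Sum.inl i ∧ b = Sum.inr j))

/-- The join `K_{1,n} + K̄_m`: a star with center `Sum.inl 0` and leaves
`Sum.inl i`, `i ≠ 0`, plus `m` vertices joined to all star vertices. -/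
def starJoin (n m : ℕ) : SimpleGraph (Fin (n + 1) ⊕ Fin m) :=
  SimpleGraph.fromRel (fun a b =>
    (∃ i : Fin (n + 1), a = Sum.inl 0 ∧ b = Sum.inl i ∧ i ≠ 0) ∨
    (∃ (i : Fin (n + 1)) (j : Fin m), a = Sum.inl i ∧ b = Sum.inr j))

/-- The join `C_n + K̄_m`: a cycle `u_1 … u_n` plus `m` vertices joined to every `u_i`. -/
def cycleJoin (n m : ℕ) : SimpleGraph (Fin n ⊕ Fin m) :=
  SimpleGraph.fromRel (fun a b =>
    (∃ i j : Fin n, a = Sum.inl i ∧ b = Sum.inl j ∧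
      ((j : ℕ) = (i : ℕ) + 1 ∨ ((i : ℕ) = n - 1 ∧ (j : ℕ) = 0))) ∨
    (∃ (i : Fin n) (j : Fin m), a = Sum.inl i ∧ b = Sum.inr j))

/-- The join `G + K̄_m`: `G` plus `m` new vertices joined to every vertex of `G`. -/
def joinIsolated {V : Type*} (G : SimpleGraph V) (m : ℕ) : SimpleGraph (V ⊕ Fin m) :=
  SimpleGraph.fromRel (fun a b =>
    (∃ x y : V, a = Sum.inl x ∧ b = Sum.inl y ∧ G.Adj x y) ∨
    (∃ (x : V) (j : Fin m), a = Sum.inl x ∧ b = Sum.inr j))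

open Function Set

lemma lt_mul_iff_exists_mul_add {x n K : ℕ} : x < K * n ↔ ∃ k < K, ∃ r < n, x = k * n + r := by
  constructor
  · intro h
    have hn : 0 < n := Nat.pos_of_mul_pos_left (Nat.zero_lt_of_lt h)
    exact ⟨x / n, Nat.div_lt_of_lt_mul (by rwa [mul_comm]), x % n, Nat.mod_lt x hn,
      (Nat.div_add_mod' x n).symm⟩
  · rintro ⟨k, hk, r, hr, rfl⟩
    calc k * n + r < (k + 1) * n := by rw [add_mul, one_mul]; omega
      _ ≤ K * n := Nat.mul_le_mul_right n hk

lemma mul_add_inj_of_lt {n k k' r r' : ℕ} (hr : r < n) (hr' : r' < n)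
    (h : k * n + r = k' * n + r') : k = k' ∧ r = r' := by
  have hn : 0 < n := by omega
  obtain ⟨hk, hr⟩ := (Nat.div_mod_unique (d := k) hn).2 ⟨by rw [mul_comm, add_comm], hr⟩
  obtain ⟨hk', hr'⟩ := (Nat.div_mod_unique (d := k') hn).2 ⟨by rw [mul_comm, add_comm], hr'⟩
  rw [h] at hk hr
  exact ⟨hk.symm.trans hk', hr.symm.trans hr'⟩

def edgeSum {V : Type*} (f : V → ℕ) : Sym2 V → ℕ :=
  Sym2.lift ⟨fun x y => f x + f y, fun _ _ => Nat.add_comm _ _⟩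

@[simp] lemma edgeSum_mk {V : Type*} (f : V → ℕ) (x y : V) :
    edgeSum f s(x, y) = f x + f y := rfl

lemma edgeSum_map {V W : Type*} (F : W → ℕ) (φ : V → W) (e : Sym2 V) :
    edgeSum F (e.map φ) = edgeSum (F ∘ φ) e := by
  induction e using Sym2.ind with
  | _ x y => rfl

theorem isSEM_of_edgeSum {V : Type*} [Fintype V] (G : SimpleGraph V) (f : V → ℕ) (c d : ℕ)
    (hf : Injective f) (hrange : range f = Icc 1 (Fintype.card V))
    (hinj : InjOn (edgeSum f) G.edgeSet) (himage : edgeSum f '' G.edgeSet = Icc c d) :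
    IsSEM G := by
  set p := Fintype.card V
  have hsum_le (e : G.edgeSet) : c ≤ edgeSum f e ∧ edgeSum f e ≤ d :=
    himage.subset (mem_image_of_mem _ e.2)
  have hf_le (v : V) : f v ≤ p := (hrange.subset (mem_range_self v)).2
  -- edge labels are reflected so that every edge has weight `p + d + 1`
  set g : G.edgeSet → ℕ := fun e => p + d + 1 - edgeSum f e
  have hg_range : range g = Icc (p + 1) (p + d + 1 - c) := by
    ext y
    refine ⟨?_, fun hy => ?_⟩
    · rintro ⟨e, rfl⟩
      have := hsum_le e
      simp only [g, mem_Icc]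
      omega
    · obtain ⟨e, he, hey⟩ := himage.symm.subset (show p + d + 1 - y ∈ Icc c d by
        simp only [mem_Icc] at hy ⊢; omega)
      refine ⟨⟨e, he⟩, ?_⟩
      simp only [g, mem_Icc] at hy ⊢
      omega
  have hcard : G.edgeSet.ncard = d + 1 - c := by
    rw [← hinj.ncard_image, himage, ncard_Icc_nat]
  refine ⟨p + d + 1, f, g, hf.sumElim (fun e e' h => ?_) (fun v e h => ?_), ?_, hrange, ?_⟩
  · have := hsum_le e
    have := hsum_le e'
    exact Subtype.ext (hinj e.2 e'.2 (by simp only [g] at h; omega))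
  · have := hf_le v
    have := hsum_le e
    simp only [g] at h
    omega
  · rw [Sum.elim_range, hrange, hg_range, hcard]
    ext y
    simp only [mem_union, mem_Icc]
    omega
  · intro x y h
    have := hsum_le ⟨s(x, y), G.mem_edgeSet.mpr h⟩
    simp only [g, edgeSum_mk] at this ⊢
    omega

lemma exists_extend_sum_fin {V : Type*} [Fintype V] (t : ℕ) (f : V → ℕ) (hf : Injective f)
    (hle : ∀ v, f v ∈ Icc 1 (Fintype.card V + t)) :
    ∃ F : V ⊕ Fin t → ℕ, F ∘ Sum.inl = f ∧ Injective F ∧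
      range F = Icc 1 (Fintype.card V + t) := by
  classical
  set N := Fintype.card V + t
  set free := Finset.Icc 1 N \ Finset.univ.image f
  have hsub : Finset.univ.image f ⊆ Finset.Icc 1 N := by
    simpa [Finset.subset_iff] using hle
  have hfree : free.card = t := by
    rw [Finset.card_sdiff_of_subset hsub, Nat.card_Icc, Finset.card_image_of_injective _ hf,
      Finset.card_univ]
    omega
  set e := free.equivFinOfCardEq hfree
  refine ⟨Sum.elim f (fun k => e.symm k), rfl,
    hf.sumElim (Subtype.val_injective.comp e.symm.injective) fun v k h => ?_, ?_⟩
  · have := (e.symm k).2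
    simp only [free, Finset.mem_sdiff] at this
    exact this.2 (h ▸ Finset.mem_image_of_mem f (Finset.mem_univ v))
  · have hfree_range : range (fun k => (e.symm k : ℕ)) = free := by
      ext y
      exact ⟨fun ⟨k, hk⟩ => hk ▸ (e.symm k).2, fun hy => ⟨e ⟨y, hy⟩, by simp⟩⟩
    rw [Sum.elim_range, hfree_range]
    simp only [free, Finset.coe_sdiff, Finset.coe_Icc, Finset.coe_image, Finset.coe_univ,
      image_univ]
    exact union_sdiff_cancel (range_subset_iff.mpr hle)

theorem isSEM_unionIsolated_of_edgeSum {V : Type*} [Fintype V] (G : SimpleGraph V) (t : ℕ)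
    (f : V → ℕ) (c d : ℕ) (hf : Injective f) (hle : ∀ v, f v ∈ Icc 1 (Fintype.card V + t))
    (hinj : InjOn (edgeSum f) G.edgeSet) (himage : edgeSum f '' G.edgeSet = Icc c d) :
    IsSEM (unionIsolated G t) := by
  obtain ⟨F, hFf, hF, hrange⟩ := exists_extend_sum_fin t f hf hle
  have hedges : (unionIsolated G t).edgeSet = Sym2.map Sum.inl '' G.edgeSet :=
    SimpleGraph.edgeSet_map _ _
  have hsum : edgeSum F ∘ Sym2.map Sum.inl = edgeSum f := by
    funext e
    rw [comp_apply, edgeSum_map, hFf]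
  refine isSEM_of_edgeSum _ F c d hF (by rw [hrange, Fintype.card_sum, Fintype.card_fin]) ?_ ?_
  · rw [hedges]
    exact InjOn.image_of_comp (hsum ▸ hinj)
  · rwa [hedges, ← image_comp, hsum]

section CycleJoin

variable {n m : ℕ}

lemma cycleJoin_adj_inl_inr (i : Fin n) (j : Fin m) :
    (cycleJoin n m).Adj (Sum.inl i) (Sum.inr j) := by
  rw [cycleJoin, fromRel_adj]
  exact ⟨Sum.inl_ne_inr, Or.inl (Or.inr ⟨i, j, rfl, rfl⟩)⟩

lemma cycleJoin_adj_inl_inl {i j : Fin n} (hne : i ≠ j)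
    (h : (j : ℕ) = i + 1 ∨ ((i : ℕ) = n - 1 ∧ (j : ℕ) = 0)) :
    (cycleJoin n m).Adj (Sum.inl i) (Sum.inl j) := by
  rw [cycleJoin, fromRel_adj]
  exact ⟨fun h' => hne (Sum.inl_injective h'), Or.inl (Or.inl ⟨i, j, rfl, rfl, h⟩)⟩

lemma mem_edgeSet_cycleJoin {e : Sym2 (Fin n ⊕ Fin m)} (he : e ∈ (cycleJoin n m).edgeSet) :
    (∃ i j : Fin n, ((j : ℕ) = i + 1 ∨ ((i : ℕ) = n - 1 ∧ (j : ℕ) = 0)) ∧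
      e = s(Sum.inl i, Sum.inl j)) ∨
    ∃ (i : Fin n) (j : Fin m), e = s(Sum.inl i, Sum.inr j) := by
  induction e using Sym2.ind with
  | _ x y =>
    rw [mem_edgeSet, cycleJoin, fromRel_adj] at he
    obtain ⟨-, h | h⟩ := he
    · rcases h with ⟨i, j, rfl, rfl, hc⟩ | ⟨i, j, rfl, rfl⟩
      · exact Or.inl ⟨i, j, hc, rfl⟩
      · exact Or.inr ⟨i, j, rfl⟩
    · rcases h with ⟨i, j, rfl, rfl, hc⟩ | ⟨i, j, rfl, rfl⟩
      · exact Or.inl ⟨i, j, hc, Sym2.eq_swap⟩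
      · exact Or.inr ⟨i, j, Sym2.eq_swap⟩

end CycleJoin

/-- The label of the cycle vertex `u_{i+1}` of `C_{2a+1}`: the paper's `f(u_i)`, with the index
shifted to start at `0`. -/
def uLabel (a i : ℕ) : ℕ := if i % 2 = 0 then a + 2 + i / 2 else 2 * a + 2 + (i + 1) / 2

section uLabel

variable {a i j : ℕ}

lemma uLabel_mem (hi : i ≤ 2 * a) : a + 2 ≤ uLabel a i ∧ uLabel a i ≤ 3 * a + 2 := by
  unfold uLabel; split <;> omega

lemma uLabel_inj (hi : i ≤ 2 * a) (hj : j ≤ 2 * a) (h : uLabel a i = uLabel a j) : i = j := by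
  unfold uLabel at h; split at h <;> split at h <;> omega

lemma exists_uLabel_eq {r : ℕ} (hr : r ≤ 2 * a) : ∃ i ≤ 2 * a, uLabel a i = a + 2 + r := by
  by_cases hr' : r ≤ a
  · exact ⟨2 * r, by omega, by unfold uLabel; split <;> omega⟩
  · exact ⟨2 * (r - a) - 1, by omega, by unfold uLabel; split <;> omega⟩

lemma uLabel_add_uLabel (hj : j ≤ 2 * a) (h : j = i + 1 ∨ (i = 2 * a ∧ j = 0)) :
    uLabel a i + uLabel a j = 3 * a + 4 + j := by
  unfold uLabel; split <;> split <;> omega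

end uLabel

/-- `vBlock j * n + 1` is the label of `v_{j+1}`, so the labels of the `v`'s are
`1, 2n + 1, 3n + 1, …, mn + 1`. -/
def vBlock (j : ℕ) : ℕ := if j = 0 then 0 else j + 1

lemma vBlock_ne_one (j : ℕ) : vBlock j ≠ 1 := by
  unfold vBlock; split <;> omega

lemma vBlock_injective : Injective vBlock := by
  intro j j' h
  unfold vBlock at h; split at h <;> split at h <;> omega

lemma vBlock_le (j : ℕ) : vBlock j ≤ j + 1 := by
  unfold vBlock; split <;> omega

lemma exists_vBlock_eq {k m : ℕ} (hm : 1 ≤ m) (hk : k ≤ m) (hk1 : k ≠ 1) :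
    ∃ j < m, vBlock j = k := by
  rcases Nat.eq_zero_or_pos k with rfl | hk0
  · exact ⟨0, hm, rfl⟩
  · exact ⟨k - 1, by omega, by unfold vBlock; split <;> omega⟩

def cycleJoinLabel (a m : ℕ) : Fin (2 * a + 1) ⊕ Fin m → ℕ :=
  Sum.elim (fun i => uLabel a i) (fun j => vBlock j * (2 * a + 1) + 1)

section cycleJoinLabel

variable {a m : ℕ}

lemma cycleJoinLabel_injective : Injective (cycleJoinLabel a m) := by
  refine Injective.sumElim (fun i i' h => Fin.ext (uLabel_inj (by omega) (by omega) h))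
    (fun j j' h => Fin.ext (vBlock_injective (Nat.eq_of_mul_eq_mul_right (by omega)
      (Nat.add_right_cancel h)))) fun i j h => ?_
  have := uLabel_mem (a := a) (i := i) (by omega)
  unfold vBlock at h
  split at h
  · omega
  · have := Nat.mul_le_mul_right (2 * a + 1) (show 2 ≤ (j : ℕ) + 1 by omega)
    omega

lemma cycleJoinLabel_mem (hm : 2 ≤ m) (v : Fin (2 * a + 1) ⊕ Fin m) :
    cycleJoinLabel a m v ∈ Icc 1 (m * (2 * a + 1) + 1) := by
  have hmn := Nat.mul_le_mul_right (2 * a + 1) hm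
  rcases v with i | j
  · have := uLabel_mem (a := a) (i := i) (by omega)
    simp only [cycleJoinLabel, Sum.elim_inl, mem_Icc]
    omega
  · have := Nat.mul_le_mul_right (2 * a + 1) ((vBlock_le j).trans j.2)
    simp only [cycleJoinLabel, Sum.elim_inr, mem_Icc]
    omega

lemma uLabel_sub_lt (i : Fin (2 * a + 1)) : uLabel a i - (a + 2) < 2 * a + 1 := by
  have := uLabel_mem (a := a) (i := i) (by omega)
  omega

lemma edgeSum_cycleJoinLabel_inl_inl {i j : Fin (2 * a + 1)}
    (h : (j : ℕ) = i + 1 ∨ ((i : ℕ) = 2 * a + 1 - 1 ∧ (j : ℕ) = 0)) :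
    edgeSum (cycleJoinLabel a m) s(Sum.inl i, Sum.inl j) = a + 3 + (1 * (2 * a + 1) + j) := by
  rw [edgeSum_mk, cycleJoinLabel, Sum.elim_inl, Sum.elim_inl,
    uLabel_add_uLabel (by omega) (by omega)]
  ring

lemma edgeSum_cycleJoinLabel_inl_inr (i : Fin (2 * a + 1)) (j : Fin m) :
    edgeSum (cycleJoinLabel a m) s(Sum.inl i, Sum.inr j) =
      a + 3 + (vBlock j * (2 * a + 1) + (uLabel a i - (a + 2))) := by
  have := uLabel_mem (a := a) (i := i) (by omega)
  rw [edgeSum_mk, cycleJoinLabel, Sum.elim_inl, Sum.elim_inr]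
  omega

lemma cycleJoinLabel_edgeSum_injOn :
    InjOn (edgeSum (cycleJoinLabel a m)) (cycleJoin (2 * a + 1) m).edgeSet := by
  intro e he e' he' h
  rcases mem_edgeSet_cycleJoin he with ⟨i, j, hij, rfl⟩ | ⟨i, j, rfl⟩ <;>
    rcases mem_edgeSet_cycleJoin he' with ⟨i', j', hij', rfl⟩ | ⟨i', j', rfl⟩
  · rw [edgeSum_cycleJoinLabel_inl_inl hij, edgeSum_cycleJoinLabel_inl_inl hij'] at h
    have hj : j = j' := Fin.ext (mul_add_inj_of_lt j.2 j'.2 (Nat.add_left_cancel h)).2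
    have hi : i = i' := Fin.ext (by omega)
    rw [hi, hj]
  · rw [edgeSum_cycleJoinLabel_inl_inl hij, edgeSum_cycleJoinLabel_inl_inr] at h
    exact (vBlock_ne_one _
      (mul_add_inj_of_lt j.2 (uLabel_sub_lt i') (Nat.add_left_cancel h)).1.symm).elim
  · rw [edgeSum_cycleJoinLabel_inl_inr, edgeSum_cycleJoinLabel_inl_inl hij'] at h
    exact (vBlock_ne_one _
      (mul_add_inj_of_lt (uLabel_sub_lt i) j'.2 (Nat.add_left_cancel h)).1).elim
  · rw [edgeSum_cycleJoinLabel_inl_inr, edgeSum_cycleJoinLabel_inl_inr] at h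
    obtain ⟨hk, hr⟩ :=
      mul_add_inj_of_lt (uLabel_sub_lt i) (uLabel_sub_lt i') (Nat.add_left_cancel h)
    have := uLabel_mem (a := a) (i := i) (by omega)
    have := uLabel_mem (a := a) (i := i') (by omega)
    obtain rfl : i = i' :=
      Fin.ext (uLabel_inj (a := a) (i := i) (j := i') (by omega) (by omega) (by omega))
    obtain rfl : j = j' := Fin.ext (vBlock_injective hk)
    rfl

lemma cycleJoinLabel_edgeSum_image (ha : 1 ≤ a) (hm : 1 ≤ m) :
    edgeSum (cycleJoinLabel a m) '' (cycleJoin (2 * a + 1) m).edgeSet =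
      Icc (a + 3) (a + 2 + (m + 1) * (2 * a + 1)) := by
  apply Subset.antisymm
  · rintro _ ⟨e, he, rfl⟩
    suffices ∃ k < m + 1, ∃ r < 2 * a + 1,
        edgeSum (cycleJoinLabel a m) e = a + 3 + (k * (2 * a + 1) + r) by
      obtain ⟨k, hk, r, hr, hs⟩ := this
      have := lt_mul_iff_exists_mul_add.2 ⟨k, hk, r, hr, rfl⟩
      rw [mem_Icc]
      omega
    rcases mem_edgeSet_cycleJoin he with ⟨i, j, hij, rfl⟩ | ⟨i, j, rfl⟩
    · exact ⟨1, by omega, j, j.2, edgeSum_cycleJoinLabel_inl_inl hij⟩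
    · exact ⟨vBlock j, by have := vBlock_le j; omega, _, uLabel_sub_lt i,
        edgeSum_cycleJoinLabel_inl_inr i j⟩
  · intro s hs
    rw [mem_Icc] at hs
    obtain ⟨k, hk, r, hr, hkr⟩ :=
      lt_mul_iff_exists_mul_add.1 (show s - (a + 3) < (m + 1) * (2 * a + 1) by omega)
    obtain rfl : s = a + 3 + (k * (2 * a + 1) + r) := by omega
    by_cases hk1 : k = 1
    · subst hk1
      obtain ⟨i, hne, hij⟩ : ∃ i : Fin (2 * a + 1), i ≠ ⟨r, hr⟩ ∧
          (r = i + 1 ∨ ((i : ℕ) = 2 * a + 1 - 1 ∧ r = 0)) := by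
        rcases Nat.eq_zero_or_pos r with rfl | hr0
        · exact ⟨⟨2 * a, by omega⟩, by simp [Fin.ext_iff]; omega, Or.inr ⟨by simp, rfl⟩⟩
        · exact ⟨⟨r - 1, by omega⟩, by simp [Fin.ext_iff]; omega, Or.inl (by simp; omega)⟩
      exact ⟨_, (mem_edgeSet _).2 (cycleJoin_adj_inl_inl hne hij),
        edgeSum_cycleJoinLabel_inl_inl hij⟩
    · obtain ⟨j, hj, rfl⟩ := exists_vBlock_eq hm (by omega) hk1
      obtain ⟨i, hi, hir⟩ := exists_uLabel_eq (a := a) (by omega : r ≤ 2 * a)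
      refine ⟨s(Sum.inl ⟨i, by omega⟩, Sum.inr ⟨j, hj⟩),
        (mem_edgeSet _).2 (cycleJoin_adj_inl_inr _ _), ?_⟩
      rw [edgeSum_cycleJoinLabel_inl_inr, hir, Nat.add_sub_cancel_left]

end cycleJoinLabel

/-- for odd `n ≥ 3` and `m ≥ 2`, `C_n + K̄_m ∪ (mn − n − m + 1) K₁` is
super edge-magic, i.e. `μₛ(C_n + K̄_m) ≤ mn − (n+m) + 1`. -/
theorem stmt16 (n m : ℕ) (hn : 3 ≤ n) (hodd : Odd n) (hm : 2 ≤ m) :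
    IsSEM (unionIsolated (cycleJoin n m) (m * n - (n + m) + 1)) ∧
    semDeficiency (cycleJoin n m) ≤ ((m * n - (n + m) + 1 : ℕ) : ℕ∞) := by
  obtain ⟨a, rfl⟩ := hodd
  have hsem : IsSEM (unionIsolated (cycleJoin (2 * a + 1) m)
      (m * (2 * a + 1) - (2 * a + 1 + m) + 1)) := by
    refine isSEM_unionIsolated_of_edgeSum _ _ _ _ _ cycleJoinLabel_injective (fun v => ?_)
      cycleJoinLabel_edgeSum_injOn (cycleJoinLabel_edgeSum_image (by omega) (by omega))
    have := Nat.mul_le_mul_right (2 * a + 1) hm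
    have := Nat.mul_le_mul_left m (show 3 ≤ 2 * a + 1 by omega)
    rw [Fintype.card_sum, Fintype.card_fin, Fintype.card_fin]
    convert cycleJoinLabel_mem hm v using 2
    omega
  exact ⟨hsem, sInf_le ⟨_, hsem, rfl⟩⟩
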